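/- Let d, n be natural numbers, let s be a real number with 2(s − n) > d, let δ > 0, and let p, q be probability density functions on ℝ^d with finite absolute moments of order n such that ∫_{ℝ^d} (1 + ‖x‖²)^s · (p(x) − q(x))² dx ≤ δ². Then the constant C := ( ∫_{ℝ^d} (1 + ‖x‖²)^{n−s} dx )^{1/2} is finite, and for every multi-index α = (α₁,…,α_d) with |α| = α₁+⋯+α_d ≤ n, the corresponding moments of p and q differ by at most C·δ: | ∫_{ℝ^d} x^α · (p(x) − q(x)) dx | ≤ C·δ. -/

import Mathlib

open MeasureTheory

/-- **Sobolev-type regularity bounds moment differences.** If two probability densities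
`p, q` on `ℝ^d` with finite absolute moments of order `n` satisfy the weighted `L²` bound
`∫ (1+‖x‖²)^s (p-q)² ≤ δ²` with `2(s-n) > d`, then the constant
`C = (∫ (1+‖x‖²)^{n-s})^{1/2}` is finite and all moments of order `≤ n` of `p` and `q`
differ by at most `C·δ`. -/
theorem weighted_L2_bounds_moments
    (d n : ℕ) (s : ℝ) (hs : (d : ℝ) < 2 * (s - n)) (δ : ℝ) (hδ : 0 < δ)
    (p q : EuclideanSpace ℝ (Fin d) → ℝ)
    (hpmeas : Measurable p) (hqmeas : Measurable q)
    (hp0 : ∀ x, 0 ≤ p x) (hq0 : ∀ x, 0 ≤ q x)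
    (hp1 : (∫ x, p x) = 1) (hq1 : (∫ x, q x) = 1)
    (hpmom : Integrable (fun x => ‖x‖ ^ n * p x))
    (hqmom : Integrable (fun x => ‖x‖ ^ n * q x))
    (hL2int : Integrable
      (fun x : EuclideanSpace ℝ (Fin d) => (1 + ‖x‖ ^ 2) ^ s * (p x - q x) ^ 2))
    (hclose : (∫ x : EuclideanSpace ℝ (Fin d),
        (1 + ‖x‖ ^ 2) ^ s * (p x - q x) ^ 2) ≤ δ ^ 2) :
    Integrable (fun x : EuclideanSpace ℝ (Fin d) => (1 + ‖x‖ ^ 2) ^ ((n : ℝ) - s)) ∧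
    ∀ α : Fin d → ℕ, (∑ i, α i) ≤ n →
      |∫ x : EuclideanSpace ℝ (Fin d), (∏ i, x i ^ α i) * (p x - q x)|
        ≤ (∫ x : EuclideanSpace ℝ (Fin d),
            (1 + ‖x‖ ^ 2) ^ ((n : ℝ) - s)) ^ (1 / 2 : ℝ) * δ := by
  have ht1 : ∀ x : EuclideanSpace ℝ (Fin d), (1 : ℝ) ≤ 1 + ‖x‖ ^ 2 := fun x => by nlinarith [sq_nonneg ‖x‖]
  have ht0 : ∀ x : EuclideanSpace ℝ (Fin d), (0 : ℝ) < 1 + ‖x‖ ^ 2 := fun x => by positivity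
  -- Part 1 : integrability of the weight
  have hC : Integrable (fun x : EuclideanSpace ℝ (Fin d) => (1 + ‖x‖ ^ 2) ^ ((n : ℝ) - s)) := by
    have hnr : (Module.finrank ℝ (EuclideanSpace ℝ (Fin d)) : ℝ) < 2 * (s - n) := by
      simpa using hs
    have := integrable_rpow_neg_one_add_norm_sq (μ := (volume : Measure (EuclideanSpace ℝ (Fin d)))) hnr
    convert this using 2 with x
    ring_nf
  refine ⟨hC, fun α hα => ?_⟩
  -- pointwise coordinate bound
  have hcoord : ∀ (x : EuclideanSpace ℝ (Fin d)) (i : Fin d), |x i| ≤ ‖x‖ := by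
    intro x i
    rw [EuclideanSpace.norm_eq]
    rw [← Real.sqrt_sq_eq_abs]
    apply Real.sqrt_le_sqrt
    have := Finset.single_le_sum (f := fun j => ‖x j‖ ^ 2)
      (fun j _ => by positivity) (Finset.mem_univ i)
    simpa [Real.norm_eq_abs, sq_abs] using this
  -- bound on the monomial
  have hmono : ∀ x : EuclideanSpace ℝ (Fin d),
      (∏ i, x i ^ α i) ^ 2 ≤ (1 + ‖x‖ ^ 2) ^ (n : ℝ) := by
    intro x
    have h1 : |∏ i, x i ^ α i| ≤ ‖x‖ ^ (∑ i, α i) := by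
      rw [Finset.abs_prod, ← Finset.prod_pow_eq_pow_sum]
      apply Finset.prod_le_prod (fun i _ => by positivity)
      intro i _
      rw [abs_pow]
      exact pow_le_pow_left₀ (abs_nonneg _) (hcoord x i) _
    have h2 : (∏ i, x i ^ α i) ^ 2 ≤ (‖x‖ ^ (∑ i, α i)) ^ 2 := by
      rw [← sq_abs]
      exact pow_le_pow_left₀ (abs_nonneg _) h1 2
    refine h2.trans ?_
    have h3 : (‖x‖ ^ (∑ i, α i)) ^ 2 = (‖x‖ ^ 2) ^ (∑ i, α i) := by ring
    rw [h3]
    calc (‖x‖ ^ 2) ^ (∑ i, α i) ≤ (1 + ‖x‖ ^ 2) ^ (∑ i, α i) := by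
          exact pow_le_pow_left₀ (by positivity) (by linarith) _
      _ ≤ (1 + ‖x‖ ^ 2) ^ n := pow_le_pow_right₀ (ht1 x) hα
      _ = (1 + ‖x‖ ^ 2) ^ (n : ℝ) := by rw [Real.rpow_natCast]
  -- the two factors for Cauchy–Schwarz
  set u : EuclideanSpace ℝ (Fin d) → ℝ :=
    fun x => (∏ i, x i ^ α i) * (1 + ‖x‖ ^ 2) ^ (-(s / 2)) with hu
  set v : EuclideanSpace ℝ (Fin d) → ℝ :=
    fun x => (1 + ‖x‖ ^ 2) ^ (s / 2) * (p x - q x) with hv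
  have hwcont : ∀ c : ℝ, Continuous (fun x : EuclideanSpace ℝ (Fin d) => (1 + ‖x‖ ^ 2) ^ c) := by
    intro c
    exact (continuous_const.add ((continuous_norm).pow 2)).rpow_const
      (fun x => Or.inl (ht0 x).ne')
  have humeas : Measurable u := by
    apply Measurable.mul
    · exact Finset.measurable_prod _ fun i _ =>
        ((EuclideanSpace.proj i : EuclideanSpace ℝ (Fin d) →L[ℝ] ℝ).continuous.measurable).pow_const _
    · exact (hwcont (-(s / 2))).measurable
  have hvmeas : Measurable v := by
    apply Measurable.mul
    · exact (hwcont (s / 2)).measurable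
    · exact hpmeas.sub hqmeas
  have husq : ∀ x, u x ^ 2 = (∏ i, x i ^ α i) ^ 2 * (1 + ‖x‖ ^ 2) ^ (-s) := by
    intro x
    rw [hu]
    have : ((1 + ‖x‖ ^ 2) ^ (-(s / 2)) : ℝ) ^ 2 = (1 + ‖x‖ ^ 2) ^ (-s) := by
      rw [← Real.rpow_natCast ((1 + ‖x‖ ^ 2) ^ (-(s / 2))) 2, ← Real.rpow_mul (ht0 x).le]
      norm_num
    rw [mul_pow, this]
  have hvsq : ∀ x, v x ^ 2 = (1 + ‖x‖ ^ 2) ^ s * (p x - q x) ^ 2 := by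
    intro x
    rw [hv]
    have : ((1 + ‖x‖ ^ 2) ^ (s / 2) : ℝ) ^ 2 = (1 + ‖x‖ ^ 2) ^ s := by
      rw [← Real.rpow_natCast ((1 + ‖x‖ ^ 2) ^ (s / 2)) 2, ← Real.rpow_mul (ht0 x).le]
      norm_num
    rw [mul_pow, this]
  have husq_le : ∀ x, u x ^ 2 ≤ (1 + ‖x‖ ^ 2) ^ ((n : ℝ) - s) := by
    intro x
    rw [husq x]
    calc (∏ i, x i ^ α i) ^ 2 * (1 + ‖x‖ ^ 2) ^ (-s)
        ≤ (1 + ‖x‖ ^ 2) ^ (n : ℝ) * (1 + ‖x‖ ^ 2) ^ (-s) :=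
          mul_le_mul_of_nonneg_right (hmono x) (Real.rpow_nonneg (ht0 x).le _)
      _ = (1 + ‖x‖ ^ 2) ^ ((n : ℝ) - s) := by
          rw [← Real.rpow_add (ht0 x)]; ring_nf
  have husq_int : Integrable (fun x => u x ^ 2) := by
    refine hC.mono' ((humeas.pow_const 2).aestronglyMeasurable) ?_
    filter_upwards with x
    rw [Real.norm_eq_abs, abs_of_nonneg (sq_nonneg _)]
    exact husq_le x
  have hvsq_int : Integrable (fun x => v x ^ 2) := by
    refine hL2int.congr ?_
    filter_upwards with x
    exact (hvsq x).symm
  have hu2 : MemLp u 2 volume :=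
    (memLp_two_iff_integrable_sq humeas.aestronglyMeasurable).2 husq_int
  have hv2 : MemLp v 2 volume :=
    (memLp_two_iff_integrable_sq hvmeas.aestronglyMeasurable).2 hvsq_int
  have hconj : Real.HolderConjugate 2 2 := ⟨by norm_num, by norm_num, by norm_num⟩
  have hcs := integral_mul_norm_le_Lp_mul_Lq (μ := (volume : Measure (EuclideanSpace ℝ (Fin d))))
    (f := u) (g := v) hconj (by simpa using hu2) (by simpa using hv2)
  -- rewrite the integrands
  have huv : ∀ x, u x * v x = (∏ i, x i ^ α i) * (p x - q x) := by
    intro x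
    rw [hu, hv]
    have : ((1 + ‖x‖ ^ 2) ^ (-(s / 2)) : ℝ) * (1 + ‖x‖ ^ 2) ^ (s / 2) = 1 := by
      rw [← Real.rpow_add (ht0 x)]; norm_num
    calc (∏ i, x i ^ α i) * (1 + ‖x‖ ^ 2) ^ (-(s / 2)) * ((1 + ‖x‖ ^ 2) ^ (s / 2) * (p x - q x))
        = (∏ i, x i ^ α i) * ((1 + ‖x‖ ^ 2) ^ (-(s / 2)) * (1 + ‖x‖ ^ 2) ^ (s / 2)) * (p x - q x) := by
          ring
      _ = (∏ i, x i ^ α i) * (p x - q x) := by rw [this]; ring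
  have step1 : |∫ x : EuclideanSpace ℝ (Fin d), (∏ i, x i ^ α i) * (p x - q x)|
      ≤ ∫ x, ‖u x‖ * ‖v x‖ := by
    calc |∫ x : EuclideanSpace ℝ (Fin d), (∏ i, x i ^ α i) * (p x - q x)|
        = |∫ x, u x * v x| := by
          congr 1; exact integral_congr_ae (Filter.Eventually.of_forall fun x => (huv x).symm)
      _ ≤ ∫ x, ‖u x‖ * ‖v x‖ := by
          simpa [Real.norm_eq_abs, abs_mul] using
            norm_integral_le_integral_norm (μ := volume) (fun x => u x * v x)
  have hnorm_sq_u : (∫ x, ‖u x‖ ^ (2 : ℝ)) = ∫ x, u x ^ 2 := by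
    congr 1; funext x
    rw [Real.norm_eq_abs, show ((2:ℝ)) = ((2:ℕ):ℝ) by norm_num, Real.rpow_natCast, sq_abs]
  have hnorm_sq_v : (∫ x, ‖v x‖ ^ (2 : ℝ)) = ∫ x, v x ^ 2 := by
    congr 1; funext x
    rw [Real.norm_eq_abs, show ((2:ℝ)) = ((2:ℕ):ℝ) by norm_num, Real.rpow_natCast, sq_abs]
  have hIu : (∫ x, u x ^ 2) ≤ ∫ x : EuclideanSpace ℝ (Fin d), (1 + ‖x‖ ^ 2) ^ ((n : ℝ) - s) :=
    integral_mono husq_int hC husq_le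
  have hIv : (∫ x, v x ^ 2) ≤ δ ^ 2 := by
    calc (∫ x, v x ^ 2) = ∫ x : EuclideanSpace ℝ (Fin d), (1 + ‖x‖ ^ 2) ^ s * (p x - q x) ^ 2 := by
          exact integral_congr_ae (Filter.Eventually.of_forall fun x => hvsq x)
      _ ≤ δ ^ 2 := hclose
  have hIu0 : (0:ℝ) ≤ ∫ x, u x ^ 2 := integral_nonneg fun x => sq_nonneg _
  have hIv0 : (0:ℝ) ≤ ∫ x, v x ^ 2 := integral_nonneg fun x => sq_nonneg _
  have step2 : (∫ x, ‖u x‖ ^ (2:ℝ)) ^ (1/2 : ℝ) * (∫ x, ‖v x‖ ^ (2:ℝ)) ^ (1/2 : ℝ)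
      ≤ (∫ x : EuclideanSpace ℝ (Fin d), (1 + ‖x‖ ^ 2) ^ ((n : ℝ) - s)) ^ (1/2 : ℝ) * δ := by
    rw [hnorm_sq_u, hnorm_sq_v]
    have h1 : (∫ x, u x ^ 2) ^ (1/2 : ℝ)
        ≤ (∫ x : EuclideanSpace ℝ (Fin d), (1 + ‖x‖ ^ 2) ^ ((n : ℝ) - s)) ^ (1/2 : ℝ) :=
      Real.rpow_le_rpow hIu0 hIu (by norm_num)
    have h2 : (∫ x, v x ^ 2) ^ (1/2 : ℝ) ≤ δ := by
      have := Real.rpow_le_rpow hIv0 hIv (by norm_num : (0:ℝ) ≤ 1/2)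
      calc (∫ x, v x ^ 2) ^ (1/2 : ℝ) ≤ (δ ^ 2) ^ (1/2 : ℝ) := this
        _ = δ := by
            rw [← Real.rpow_natCast δ 2, ← Real.rpow_mul hδ.le]; norm_num
    exact mul_le_mul h1 h2 (Real.rpow_nonneg hIv0 _)
      (Real.rpow_nonneg (integral_nonneg fun x => Real.rpow_nonneg (ht0 x).le _) _)
  calc |∫ x : EuclideanSpace ℝ (Fin d), (∏ i, x i ^ α i) * (p x - q x)|
      ≤ ∫ x, ‖u x‖ * ‖v x‖ := step1
    _ ≤ (∫ x, ‖u x‖ ^ (2:ℝ)) ^ (1/2 : ℝ) * (∫ x, ‖v x‖ ^ (2:ℝ)) ^ (1/2 : ℝ) := hcs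
    _ ≤ _ := step2
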